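/- arXiv:gr-qc/9802043 — 2 statements merged into one kernel-verified Lean document; each statement's English description precedes it below -/
import Mathlib

section
/- Let λ > 0 and let J denote the 3×3 Jacobian matrix of the reduced vector field F at the critical point P₃ = ((2−λ²)/(2√3(λ²+1)), √(λ²+2)/(√2(λ²+1)), λ/(λ²+1)). Then the characteristic polynomial of J factors as (X + (λ²+2)/(2(λ²+1)))·(X² + ((λ²+2)/(2(λ²+1)))·X + (λ²+2)(λ²−2)/(2(λ²+1)²)); equivalently, the eigenvalues are ε₁ = −(λ²+2)/(2(λ²+1)) and ε₂,₃ = (−(λ²+2) ± √((18−7λ²)(λ²+2)))/(4(λ²+1)). -/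
/-- The reduced vector field `F : ℝ³ → ℝ³` in the variables `(S, U, P)`. -/
noncomputable def Fvec (lam : ℝ) (x : Fin 3 → ℝ) : Fin 3 → ℝ :=
  ![-1 / (3 * Real.sqrt 3) - (2 / 3) * x 0 + x 0 ^ 2 / Real.sqrt 3
      + x 1 ^ 2 / Real.sqrt 3 + x 2 ^ 2 / (2 * Real.sqrt 3)
      + 2 * x 0 ^ 3 - x 0 * x 1 ^ 2 + x 0 * x 2 ^ 2,
    x 1 * (1 / 3 - (lam / 2) * x 2 + 2 * x 0 ^ 2 - x 1 ^ 2 + x 2 ^ 2),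
    -(2 / 3) * x 2 + lam * x 1 ^ 2 + 2 * x 0 ^ 2 * x 2 - x 1 ^ 2 * x 2
      + x 2 ^ 3]

/-- The Jacobian matrix of `F` at `x`: entry `(i, j)` is the partial
derivative of the `i`-th component with respect to the `j`-th variable. -/
noncomputable def jac (lam : ℝ) (x : Fin 3 → ℝ) : Matrix (Fin 3) (Fin 3) ℝ :=
  Matrix.of fun i j => deriv (fun s => Fvec lam (Function.update x j s) i) (x j)

/-!
The Jacobian of `F` at a general point `(S, U, P)` is a matrix of polynomials in `S, U, P` and `1/√3`.
At `P₃` its trace, sum of principal 2-minors and determinant are rational functions of `λ` once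
`√3² = 3`, `√2² = 2` and `√(λ²+2)² = λ²+2` are used, and they match the coefficients of the claimed
product. When `7λ² ≤ 18` the quadratic factor has discriminant `(18 − 7λ²)(λ²+2)/(4(λ²+1)²) ≥ 0`
and splits over `ℝ` by Vieta.
-/

open Polynomial Real

lemma Matrix.charpoly_fin_three_of {R : Type*} [CommRing R] (a b c d e f g h i : R) :
    (!![a, b, c; d, e, f; g, h, i]).charpoly
      = X ^ 3 - C (a + e + i) * X ^ 2 + C (a * e - b * d + a * i - c * g + e * i - f * h) * X
        - C (a * e * i - a * f * h - b * d * i + b * f * g + c * d * h - c * e * g) := by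
  simp only [charpoly, det_fin_three, Fin.isValue, charmatrix_apply_eq, charmatrix_apply_ne, of_apply,
    cons_val', cons_val_zero, cons_val_fin_one, cons_val_one, cons_val, ne_eq, Fin.reduceEq,
    not_false_eq_true, zero_ne_one, one_ne_zero, mul_neg, neg_mul, neg_neg, map_add, map_sub, map_mul]
  ring

lemma Polynomial.cubic_eq_X_add_C_mul_quadratic {R : Type*} [CommRing R] {t e δ a b c : R}
    (ht : t = -(a + b)) (he : e = a * b + c) (hδ : δ = -(a * c)) :
    X ^ 3 - C t * X ^ 2 + C e * X - C δ = (X + C a) * (X ^ 2 + C b * X + C c) := by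
  subst ht he hδ
  simp only [C_neg, C_add, C_mul]
  ring

lemma Polynomial.quadratic_eq_X_sub_C_mul_X_sub_C {R : Type*} [CommRing R] {b c r s : R}
    (hb : r + s = -b) (hc : r * s = c) :
    X ^ 2 + C b * X + C c = (X - C r) * (X - C s) := by
  rw [show b = -(r + s) by rw [hb, neg_neg], ← hc]
  simp only [C_neg, C_add, C_mul]
  ring

lemma jac_eq (lam S U P : ℝ) :
    jac lam ![S, U, P] =
      !![-2 / 3 + 2 * S / √3 + 6 * S ^ 2 - U ^ 2 + P ^ 2, 2 * (1 / √3 - S) * U, (1 / √3 + 2 * S) * P;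
        4 * S * U, 1 / 3 - lam / 2 * P + 2 * S ^ 2 - 3 * U ^ 2 + P ^ 2, (2 * P - lam / 2) * U;
        4 * S * P, 2 * (lam - P) * U, -2 / 3 + 2 * S ^ 2 - U ^ 2 + 3 * P ^ 2] := by
  ext i j
  fin_cases i <;> fin_cases j <;>
    simp only [jac, Fvec, Matrix.of_apply, Fin.isValue, Fin.zero_eta, Fin.mk_one, Fin.reduceFinMk,
      Function.update_self, Function.update_of_ne, ne_eq, Fin.reduceEq, not_false_eq_true,
      Matrix.cons_val_zero, Matrix.cons_val_one, Matrix.cons_val, Matrix.cons_val',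
      Matrix.cons_val_fin_one] <;>
    simp (disch := fun_prop) only [deriv_fun_add, deriv_fun_sub, deriv_fun_mul, deriv_fun_pow,
      deriv_div_const, deriv.fun_neg', deriv_const', deriv_id'', deriv_const_mul_id'] <;>
    ring

noncomputable def P₃ (lam : ℝ) : Fin 3 → ℝ :=
  ![(2 - lam ^ 2) / (2 * √3 * (lam ^ 2 + 1)), √(lam ^ 2 + 2) / (√2 * (lam ^ 2 + 1)),
    lam / (lam ^ 2 + 1)]

lemma charpoly_jac_P₃ (lam : ℝ) :
    (jac lam (P₃ lam)).charpoly
      = (X + C ((lam ^ 2 + 2) / (2 * (lam ^ 2 + 1))))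
        * (X ^ 2 + C ((lam ^ 2 + 2) / (2 * (lam ^ 2 + 1))) * X
          + C ((lam ^ 2 + 2) * (lam ^ 2 - 2) / (2 * (lam ^ 2 + 1) ^ 2))) := by
  have h3 : √3 ^ 2 = 3 := sq_sqrt (by norm_num)
  have h2 : √2 ^ 2 = 2 := sq_sqrt (by norm_num)
  have hu : √(lam ^ 2 + 2) ^ 2 = lam ^ 2 + 2 := sq_sqrt (by positivity)
  have hd : lam ^ 2 + 1 ≠ 0 := by positivity
  rw [P₃, jac_eq, Matrix.charpoly_fin_three_of]
  apply cubic_eq_X_add_C_mul_quadratic <;> field_simp <;> grind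

open Polynomial in
theorem charpoly_at_P3_general (lam : ℝ) :
    (jac lam ![(2 - lam ^ 2) / (2 * Real.sqrt 3 * (lam ^ 2 + 1)),
        Real.sqrt (lam ^ 2 + 2) / (Real.sqrt 2 * (lam ^ 2 + 1)),
        lam / (lam ^ 2 + 1)]).charpoly
        = (X + C ((lam ^ 2 + 2) / (2 * (lam ^ 2 + 1))))
            * (X ^ 2 + C ((lam ^ 2 + 2) / (2 * (lam ^ 2 + 1))) * X
                + C ((lam ^ 2 + 2) * (lam ^ 2 - 2) / (2 * (lam ^ 2 + 1) ^ 2))) ∧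
      (7 * lam ^ 2 ≤ 18 →
        (jac lam ![(2 - lam ^ 2) / (2 * Real.sqrt 3 * (lam ^ 2 + 1)),
            Real.sqrt (lam ^ 2 + 2) / (Real.sqrt 2 * (lam ^ 2 + 1)),
            lam / (lam ^ 2 + 1)]).charpoly
          = (X - C (-(lam ^ 2 + 2) / (2 * (lam ^ 2 + 1))))
              * (X - C ((-(lam ^ 2 + 2)
                    + Real.sqrt ((18 - 7 * lam ^ 2) * (lam ^ 2 + 2)))
                  / (4 * (lam ^ 2 + 1))))
              * (X - C ((-(lam ^ 2 + 2)
                    - Real.sqrt ((18 - 7 * lam ^ 2) * (lam ^ 2 + 2)))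
                  / (4 * (lam ^ 2 + 1))))) := by
  refine ⟨charpoly_jac_P₃ lam, fun h18 => (charpoly_jac_P₃ lam).trans ?_⟩
  have hd : lam ^ 2 + 1 ≠ 0 := by positivity
  have hdisc : √((18 - 7 * lam ^ 2) * (lam ^ 2 + 2)) ^ 2 = (18 - 7 * lam ^ 2) * (lam ^ 2 + 2) :=
    sq_sqrt (by nlinarith)
  rw [neg_div, C_neg, sub_neg_eq_add, mul_assoc, quadratic_eq_X_sub_C_mul_X_sub_C]
  · field_simp
    ring
  · field_simp
    grind

open Polynomial in
/-- For `λ > 0`, the characteristic polynomial of the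
Jacobian of the reduced vector field at the critical point
`P₃ = ((2−λ²)/(2√3(λ²+1)), √(λ²+2)/(√2(λ²+1)), λ/(λ²+1))` factors as
`(X + (λ²+2)/(2(λ²+1)))·(X² + ((λ²+2)/(2(λ²+1)))X + (λ²+2)(λ²−2)/(2(λ²+1)²))`;
equivalently (when `7λ² ≤ 18`, so that all roots are real) the eigenvalues are
`ε₁ = −(λ²+2)/(2(λ²+1))` and
`ε₂,₃ = (−(λ²+2) ± √((18−7λ²)(λ²+2)))/(4(λ²+1))`. -/
theorem charpoly_at_P3 (lam : ℝ) (hlam : 0 < lam) :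
    (jac lam ![(2 - lam ^ 2) / (2 * Real.sqrt 3 * (lam ^ 2 + 1)),
        Real.sqrt (lam ^ 2 + 2) / (Real.sqrt 2 * (lam ^ 2 + 1)),
        lam / (lam ^ 2 + 1)]).charpoly
        = (X + C ((lam ^ 2 + 2) / (2 * (lam ^ 2 + 1))))
            * (X ^ 2 + C ((lam ^ 2 + 2) / (2 * (lam ^ 2 + 1))) * X
                + C ((lam ^ 2 + 2) * (lam ^ 2 - 2) / (2 * (lam ^ 2 + 1) ^ 2))) ∧
      (7 * lam ^ 2 ≤ 18 →
        (jac lam ![(2 - lam ^ 2) / (2 * Real.sqrt 3 * (lam ^ 2 + 1)),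
            Real.sqrt (lam ^ 2 + 2) / (Real.sqrt 2 * (lam ^ 2 + 1)),
            lam / (lam ^ 2 + 1)]).charpoly
          = (X - C (-(lam ^ 2 + 2) / (2 * (lam ^ 2 + 1))))
              * (X - C ((-(lam ^ 2 + 2)
                    + Real.sqrt ((18 - 7 * lam ^ 2) * (lam ^ 2 + 2)))
                  / (4 * (lam ^ 2 + 1))))
              * (X - C ((-(lam ^ 2 + 2)
                    - Real.sqrt ((18 - 7 * lam ^ 2) * (lam ^ 2 + 2)))
                  / (4 * (lam ^ 2 + 1))))) :=
  charpoly_at_P3_general lam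
end

section
/- Let V₀ > 0 and λ > √2, and set V(x) = V₀e^{−λx}. Define on (0, ∞): θ(t) = 2(λ²+1)/(λ²t), σ(t) = (2−λ²)/(√3 λ² t), φ(t) = (2/λ)ln t + (1/λ)ln(V₀λ⁴/(2(λ²+2))), ψ(t) = 2/(λt), and b(t) = λ²t/√(λ⁴−4). Then these functions satisfy the Einstein–Klein–Gordon evolution system with potential V, one has V(φ(t)) = 2(λ²+2)/(λ⁴t²), the scale-factor relation b'/b = (θ − √3σ)/3 holds, and the Bianchi III (k = −1) constraint (1/3)θ² − 1/b² = σ² + V(φ) + ψ²/2 holds identically. (This is the exact Bianchi III solution corresponding to the critical point P₃.) -/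
/-!
All of θ, σ, ψ scale like `1/t`, and since φ is logarithmic in `t` the potential `V(φ t)` scales
like `1/t²`, while `b` is linear in `t`. Each equation therefore reduces to an algebraic identity
in `λ` and `√3`, which holds modulo `√3² = 3`.
-/

open Real

lemma hasDerivAt_const_div_mul (a k : ℝ) {t : ℝ} (ht : t ≠ 0) :
    HasDerivAt (fun t => a / (k * t)) (-a / (k * t ^ 2)) t := by
  have h := (hasDerivAt_inv ht).const_mul (a / k)
  simp only [← div_eq_mul_inv, div_div] at h
  exact h.congr_deriv (by ring)

lemma hasDerivAt_exp_potential (V₀ lam x : ℝ) :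
    HasDerivAt (fun x => V₀ * exp (-lam * x)) (-lam * (V₀ * exp (-lam * x))) x :=
  (((hasDerivAt_id' x).const_mul (-lam)).exp.const_mul V₀).congr_deriv (by ring)

lemma exp_neg_mul_log_profile {lam C t : ℝ} (hlam : lam ≠ 0) (hC : 0 < C) (ht : 0 < t) :
    exp (-lam * ((2 / lam) * log t + (1 / lam) * log C)) = 1 / (C * t ^ 2) := by
  have : -lam * ((2 / lam) * log t + (1 / lam) * log C) = -log (C * t ^ 2) := by
    rw [log_mul hC.ne' (by positivity), log_pow]
    field_simp
    push_cast
    ring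
  rw [this, exp_neg, exp_log (by positivity), one_div]

/-- For the exponential potential `V(x) = V₀·exp(−λx)` with
`V₀ > 0` and `λ > √2`, the functions `θ(t) = 2(λ²+1)/(λ²t)`,
`σ(t) = (2−λ²)/(√3λ²t)`, `φ(t) = (2/λ)ln t + (1/λ)ln(V₀λ⁴/(2(λ²+2)))`,
`ψ(t) = 2/(λt)` and `b(t) = λ²t/√(λ⁴−4)` on `(0, ∞)` satisfy the
Einstein–Klein–Gordon evolution system (units `8πG = 1`), one has
`V(φ(t)) = 2(λ²+2)/(λ⁴t²)`, the scale-factor relation `b'/b = (θ − √3σ)/3`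
holds, and the Bianchi III (`k = −1`) constraint
`(1/3)θ² − 1/b² = σ² + V(φ) + ψ²/2` holds identically. This is the exact
Bianchi III solution corresponding to the critical point `P₃`. -/
theorem exact_solution_P3
    (V₀ lam : ℝ) (hV₀ : 0 < V₀) (hlam : Real.sqrt 2 < lam)
    (V : ℝ → ℝ) (hV : ∀ x, V x = V₀ * Real.exp (-lam * x))
    (θ σ φ ψ b : ℝ → ℝ)
    (hθ : ∀ t, θ t = 2 * (lam ^ 2 + 1) / (lam ^ 2 * t))
    (hσ : ∀ t, σ t = (2 - lam ^ 2) / (Real.sqrt 3 * lam ^ 2 * t))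
    (hφ : ∀ t, φ t = (2 / lam) * Real.log t
        + (1 / lam) * Real.log (V₀ * lam ^ 4 / (2 * (lam ^ 2 + 2))))
    (hψ : ∀ t, ψ t = 2 / (lam * t))
    (hb : ∀ t, b t = lam ^ 2 * t / Real.sqrt (lam ^ 4 - 4)) :
    ∀ t ∈ Set.Ioi (0 : ℝ),
      HasDerivAt θ
        (-(1 / 3) * θ t ^ 2 - 2 * σ t ^ 2 + V (φ t) - ψ t ^ 2) t ∧
      HasDerivAt σ
        (-θ t ^ 2 / (3 * Real.sqrt 3) - θ t * σ t + σ t ^ 2 / Real.sqrt 3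
          + (1 / Real.sqrt 3) * (V (φ t) + ψ t ^ 2 / 2)) t ∧
      HasDerivAt φ (ψ t) t ∧
      HasDerivAt ψ (-θ t * ψ t - deriv V (φ t)) t ∧
      V (φ t) = 2 * (lam ^ 2 + 2) / (lam ^ 4 * t ^ 2) ∧
      HasDerivAt b ((θ t - Real.sqrt 3 * σ t) / 3 * b t) t ∧
      (1 / 3) * θ t ^ 2 - 1 / b t ^ 2
        = σ t ^ 2 + V (φ t) + ψ t ^ 2 / 2 := by
  intro t (ht : 0 < t)
  have hlam0 : 0 < lam := (sqrt_pos.2 two_pos).trans hlam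
  have hlam2 : 2 < lam ^ 2 := (sqrt_lt' hlam0).1 hlam
  have hlam4 : 4 < lam ^ 4 := by nlinarith
  have hs3 : √3 ^ 2 = 3 := sq_sqrt (by norm_num)
  have hsb : √(lam ^ 4 - 4) ^ 2 = lam ^ 4 - 4 := sq_sqrt (by linarith)
  have hVφ : V (φ t) = 2 * (lam ^ 2 + 2) / (lam ^ 4 * t ^ 2) := by
    rw [hV, hφ, exp_neg_mul_log_profile hlam0.ne' (by positivity) ht]
    field_simp
  have hV' : deriv V (φ t) = -lam * V (φ t) := by
    rw [funext hV]
    exact (hasDerivAt_exp_potential V₀ lam _).deriv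
  rw [hV']
  refine ⟨?_, ?_, ?_, ?_, hVφ, ?_, ?_⟩ <;> simp only [hθ, hσ, hψ, hb, hVφ]
  · rw [funext hθ]
    refine (hasDerivAt_const_div_mul _ _ ht.ne').congr_deriv ?_
    field_simp
    grind
  · rw [funext hσ]
    refine (hasDerivAt_const_div_mul _ _ ht.ne').congr_deriv ?_
    field_simp
    grind
  · rw [funext hφ]
    refine (((hasDerivAt_log ht.ne').const_mul (2 / lam)).add_const _).congr_deriv ?_
    field_simp
  · rw [funext hψ]
    refine (hasDerivAt_const_div_mul _ _ ht.ne').congr_deriv ?_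
    field_simp
    ring
  · rw [funext hb]
    refine (((hasDerivAt_id' t).const_mul (lam ^ 2)).div_const √(lam ^ 4 - 4)).congr_deriv ?_
    field_simp
    grind
  · field_simp
    grind
end
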